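/- arXiv:2109.04642 — 5 statements merged into one kernel-verified Lean document; each statement's English description precedes it below -/
import Mathlib

section
/- Let β ∈ O_K satisfy O_K = O_F[β], and let χ_β(t) ∈ O_F[t] be the characteristic polynomial of β regarded as an element of M_n(O_F) via the regular representation. If e > 1, then the image of χ_β(t) in (O_F/𝔭_F^2)[t] is irreducible over O_F/𝔭_F^2; in particular it is not a product of two monic polynomials of positive degree with coefficients in O_F/𝔭_F^2. -/
/-!
If `χ ≡ A * B` modulo `𝔭_F²`, then `A(β) * B(β) ∈ 𝔭_F² O_K`, and since `O_K` is a valuation ring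
one factor, say `A(β)`, lies in `𝔭_F O_K`. As `O_K = O_F[β]`, this means `A(β) = W(β)` for some `W`
with coefficients in `𝔭_F`, so `χ ∣ A - W`. Reducing modulo `𝔭_F` and cancelling the monic `χ̄`
from `χ̄ = Ā * B̄` shows that `B̄` is a unit, and a unit modulo `𝔭_F` lifts to a unit modulo `𝔭_F²`.
-/

open IsLocalRing Polynomial

theorem Polynomial.isUnit_map_mk_pow_iff {R : Type*} [CommRing R] (I : Ideal R) {n : ℕ}
    (hn : n ≠ 0) (P : R[X]) :
    IsUnit (P.map (Ideal.Quotient.mk (I ^ n))) ↔ IsUnit (P.map (Ideal.Quotient.mk I)) := by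
  rw [← isUnit_map_iff (Ideal.polynomialQuotientEquivQuotientPolynomial (I ^ n)),
    ← isUnit_map_iff (Ideal.polynomialQuotientEquivQuotientPolynomial I),
    Ideal.polynomialQuotientEquivQuotientPolynomial_map_mk,
    Ideal.polynomialQuotientEquivQuotientPolynomial_map_mk, Ideal.map_pow]
  exact Ideal.Quotient.isUnit_mk_pow_iff_isUnit_mk _ hn

theorem Polynomial.Monic.not_isUnit_of_degree_pos {R : Type*} [Semiring R] {p : R[X]}
    (hp : p.Monic) (h : 0 < p.degree) : ¬IsUnit p := by
  rw [hp.isUnit_iff]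
  rintro rfl
  exact h.not_ge degree_one_le

theorem ValuationRing.dvd_or_dvd_of_sq_dvd_mul {S : Type*} [CommRing S] [IsDomain S]
    [ValuationRing S] {π x y : S} (hπ : π ≠ 0) (h : π ^ 2 ∣ x * y) : π ∣ x ∨ π ∣ y := by
  rcases ValuationRing.dvd_total π x with hx | ⟨a, ha⟩
  · exact .inl hx
  rcases ValuationRing.dvd_total π y with hy | ⟨b, hb⟩
  · exact .inr hy
  obtain ⟨c, hc⟩ := h
  have habc : a * b * c = 1 :=
    mul_left_cancel₀ (pow_ne_zero 2 hπ)
      (by linear_combination (-(a * b)) * hc - π * ha - x * a * hb)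
  exact .inl ⟨b * c, by linear_combination -x * habc - b * c * ha⟩

theorem Polynomial.map_mk_eq_zero_iff {R : Type*} [CommRing R] {I : Ideal R} {P : R[X]} :
    P.map (Ideal.Quotient.mk I) = 0 ↔ P ∈ I.map C := by
  rw [← coe_mapRingHom, ← RingHom.mem_ker, ker_mapRingHom, Ideal.mk_ker]

theorem Polynomial.map_aeval_map_C {R S : Type*} [CommRing R] [CommRing S] [Algebra R S]
    (β : S) (I : Ideal R) : (I.map C).map (aeval (R := R) β) = I.map (algebraMap R S) :=
  (Ideal.map_map C (aeval β).toRingHom).trans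
    (congrArg (Ideal.map · I) (RingHom.ext (aeval_C β)))

section MonogenicFactorization

variable {R S : Type*} [CommRing R] [CommRing S] [Algebra R S] {I : Ideal R} {β : S}
  {χ : R[X]}

theorem isUnit_map_of_aeval_mem_map (hχ : χ.Monic)
    (hsurj : Function.Surjective (aeval (R := R) β)) (hker : ∀ P, aeval β P = 0 → χ ∣ P)
    {A B : R[X]} (hA : aeval β A ∈ I.map (algebraMap R S))
    (hfac : χ.map (Ideal.Quotient.mk I) =
      A.map (Ideal.Quotient.mk I) * B.map (Ideal.Quotient.mk I)) :
    IsUnit (B.map (Ideal.Quotient.mk I)) := by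
  rw [← map_aeval_map_C, Ideal.mem_map_iff_of_surjective _ hsurj] at hA
  obtain ⟨W, hW, hWA⟩ := hA
  obtain ⟨Q, hQ⟩ := hker (A - W) (by rw [map_sub, hWA, sub_self])
  have hAQ : A.map (Ideal.Quotient.mk I) =
      χ.map (Ideal.Quotient.mk I) * Q.map (Ideal.Quotient.mk I) := by
    rw [← Polynomial.map_mul, ← hQ, Polynomial.map_sub, map_mk_eq_zero_iff.mpr hW, sub_zero]
  have hQB : χ.map (Ideal.Quotient.mk I) *
      (Q.map (Ideal.Quotient.mk I) * B.map (Ideal.Quotient.mk I) - 1) = 0 := by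
    rw [mul_sub, ← mul_assoc, ← hAQ, ← hfac, mul_one, sub_self]
  exact IsUnit.of_mul_eq_one_right _ (sub_eq_zero.mp ((hχ.map _).mul_right_eq_zero_iff.mp hQB))

theorem isUnit_or_isUnit_of_map_mk_sq_eq_mul (hχ : χ.Monic)
    (hsurj : Function.Surjective (aeval (R := R) β)) (hker : ∀ P, aeval β P = 0 ↔ χ ∣ P)
    (hI : ∀ x y : S, x * y ∈ I.map (algebraMap R S) ^ 2 →
      x ∈ I.map (algebraMap R S) ∨ y ∈ I.map (algebraMap R S))
    {a b : (R ⧸ I ^ 2)[X]} (hab : χ.map (Ideal.Quotient.mk (I ^ 2)) = a * b) :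
    IsUnit a ∨ IsUnit b := by
  obtain ⟨A, rfl⟩ := map_surjective _ Ideal.Quotient.mk_surjective a
  obtain ⟨B, rfl⟩ := map_surjective _ Ideal.Quotient.mk_surjective b
  have hsq : χ - A * B ∈ (I ^ 2).map C := by
    rw [← map_mk_eq_zero_iff, Polynomial.map_sub, Polynomial.map_mul, hab, sub_self]
  have hfac : χ.map (Ideal.Quotient.mk I) =
      A.map (Ideal.Quotient.mk I) * B.map (Ideal.Quotient.mk I) := by
    rw [← Polynomial.map_mul, ← sub_eq_zero, ← Polynomial.map_sub, map_mk_eq_zero_iff]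
    exact Ideal.map_mono (Ideal.pow_le_self two_ne_zero) hsq
  have hχβ : aeval β χ = 0 := (hker χ).mpr dvd_rfl
  have hABβ : aeval β A * aeval β B ∈ I.map (algebraMap R S) ^ 2 := by
    have := Ideal.mem_map_of_mem (aeval (R := R) β) hsq
    rw [map_aeval_map_C, Ideal.map_pow, map_sub, hχβ, zero_sub, map_mul, neg_mem_iff] at this
    exact this
  simp only [isUnit_map_mk_pow_iff _ two_ne_zero]
  rcases hI _ _ hABβ with hA | hB
  · exact .inr (isUnit_map_of_aeval_mem_map hχ hsurj (hker · |>.mp) hA hfac)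
  · exact .inl (isUnit_map_of_aeval_mem_map hχ hsurj (hker · |>.mp) hB (by rw [hfac, mul_comm]))

end MonogenicFactorization

theorem mem_or_mem_of_mul_mem_map_maximalIdeal_sq
    {R S : Type*} [CommRing R] [IsDomain R] [IsDiscreteValuationRing R]
    [CommRing S] [IsDomain S] [ValuationRing S] [Algebra R S] [FaithfulSMul R S] {x y : S}
    (h : x * y ∈ (maximalIdeal R).map (algebraMap R S) ^ 2) :
    x ∈ (maximalIdeal R).map (algebraMap R S) ∨ y ∈ (maximalIdeal R).map (algebraMap R S) := by
  obtain ⟨ϖ, hϖ⟩ := IsDiscreteValuationRing.exists_irreducible R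
  rw [(IsDiscreteValuationRing.irreducible_iff_uniformizer ϖ).mp hϖ, Ideal.map_span,
    Set.image_singleton] at h ⊢
  rw [Ideal.span_singleton_pow] at h
  simp only [Ideal.mem_span_singleton] at h ⊢
  refine ValuationRing.dvd_or_dvd_of_sq_dvd_mul ?_ h
  exact (map_ne_zero_iff _ (FaithfulSMul.algebraMap_injective R S)).mpr hϖ.ne_zero

theorem irreducible_map_minpoly_mod_maximalIdeal_sq
    {R S : Type*} [CommRing R] [IsDomain R] [IsDiscreteValuationRing R]
    [CommRing S] [IsDomain S] [ValuationRing S] [Algebra R S] [Module.IsTorsionFree R S]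
    {β : S} (hint : IsIntegral R β) (hβ : Algebra.adjoin R {β} = ⊤) :
    Irreducible ((minpoly R β).map (Ideal.Quotient.mk (maximalIdeal R ^ 2))) := by
  have : Nontrivial (R ⧸ maximalIdeal R ^ 2) :=
    Ideal.Quotient.nontrivial_iff.mpr ((Ideal.pow_le_self two_ne_zero).trans_lt
      (maximalIdeal.isMaximal R).ne_top.lt_top).ne
  have hsurj : Function.Surjective (aeval (R := R) β) := by
    rw [← AlgHom.range_eq_top, ← Algebra.adjoin_singleton_eq_range_aeval, hβ]
  refine ⟨(minpoly.monic hint).map _ |>.not_isUnit_of_degree_pos ?_, fun a b hab =>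
    isUnit_or_isUnit_of_map_mk_sq_eq_mul (minpoly.monic hint) hsurj
      (minpoly.isIntegrallyClosed_dvd_iff hint)
      (fun _ _ => mem_or_mem_of_mul_mem_map_maximalIdeal_sq) hab⟩
  rw [← natDegree_pos_iff_degree_pos, (minpoly.monic hint).natDegree_map]
  exact minpoly.natDegree_pos hint

theorem Algebra.charpoly_leftMulMatrix_eq_minpoly_of_adjoin_eq_top
    {R S : Type*} [CommRing R] [IsDomain R] [IsIntegrallyClosed R]
    [CommRing S] [IsDomain S] [Algebra R S]
    {ι : Type*} [Fintype ι] [DecidableEq ι] (b : Module.Basis ι R S)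
    {β : S} (hint : IsIntegral R β) (hβ : Algebra.adjoin R {β} = ⊤) :
    (leftMulMatrix b β).charpoly = minpoly R β := by
  have := Module.Free.of_basis b
  have := Module.Finite.of_basis b
  let pb : PowerBasis R S := (Algebra.adjoin.powerBasis' hint).map
    ((Subalgebra.equivOfEq _ ⊤ hβ).trans Subalgebra.topEquiv)
  have hgen : pb.gen = β := by
    simp [pb, Algebra.adjoin.powerBasis'_gen]
  rw [← hgen, ← charpoly_leftMulMatrix pb, leftMulMatrix_apply, leftMulMatrix_apply,
    LinearMap.charpoly_toMatrix, LinearMap.charpoly_toMatrix]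

theorem charpoly_mod_sq_irreducible_general
    {OF : Type*} [CommRing OF] [IsDomain OF] [IsDiscreteValuationRing OF]
    {OK : Type*} [CommRing OK] [IsDomain OK] [IsDiscreteValuationRing OK]
    [Algebra OF OK]
    [Module.Free OF OK] [Module.Finite OF OK]
    {n : ℕ} (b : Module.Basis (Fin n) OF OK)
    (β : OK) (hβ : Algebra.adjoin OF {β} = ⊤) :
    Irreducible ((Matrix.charpoly (Algebra.leftMulMatrix b β)).map
        (Ideal.Quotient.mk (maximalIdeal OF ^ 2))) ∧
      ¬ ∃ g h : Polynomial (OF ⧸ maximalIdeal OF ^ 2), g.Monic ∧ h.Monic ∧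
          0 < g.degree ∧ 0 < h.degree ∧
          (Matrix.charpoly (Algebra.leftMulMatrix b β)).map
            (Ideal.Quotient.mk (maximalIdeal OF ^ 2)) = g * h := by
  have hint : IsIntegral OF β := .of_finite OF β
  have hirr := irreducible_map_minpoly_mod_maximalIdeal_sq hint hβ
  rw [Algebra.charpoly_leftMulMatrix_eq_minpoly_of_adjoin_eq_top b hint hβ]
  refine ⟨hirr, ?_⟩
  rintro ⟨g, h, hg, hh, hg0, hh0, hgh⟩
  rcases hirr.isUnit_or_isUnit hgh with hu | hu
  · exact hg.not_isUnit_of_degree_pos hg0 hu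
  · exact hh.not_isUnit_of_degree_pos hh0 hu

theorem charpoly_mod_sq_irreducible
    {p : ℕ} [Fact (Nat.Prime p)] (hp : p ≠ 2)
    {F : Type*} [Field F] [Algebra ℚ_[p] F] [FiniteDimensional ℚ_[p] F]
    {OF : Type*} [CommRing OF] [IsDomain OF] [IsDiscreteValuationRing OF]
    [Algebra OF F] [IsFractionRing OF F]
    [Algebra ℤ_[p] OF] [Algebra ℤ_[p] F] [IsScalarTower ℤ_[p] ℚ_[p] F]
    [IsScalarTower ℤ_[p] OF F] [IsIntegralClosure OF ℤ_[p] F]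
    {K : Type*} [Field K] [Algebra F K] [FiniteDimensional F K]
    {OK : Type*} [CommRing OK] [IsDomain OK] [IsDiscreteValuationRing OK]
    [Algebra OK K] [IsFractionRing OK K]
    [Algebra OF OK] [Algebra OF K] [IsScalarTower OF OK K] [IsScalarTower OF F K]
    [IsIntegralClosure OK OF K]
    (hn : 1 < Module.finrank F K) (hpn : ¬ p ∣ Module.finrank F K)
    [Module.Free OF OK] [Module.Finite OF OK]
    {n : ℕ} (hn : n = Module.finrank F K) (b : Module.Basis (Fin n) OF OK)
    (e : ℕ)
    (he : e = Ideal.ramificationIdx' (maximalIdeal OF) (maximalIdeal OK))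
    (he1 : 1 < e)
    (β : OK) (hβ : Algebra.adjoin OF {β} = ⊤) :
    Irreducible ((Matrix.charpoly (Algebra.leftMulMatrix b β)).map
        (Ideal.Quotient.mk (maximalIdeal OF ^ 2))) ∧
      ¬ ∃ g h : Polynomial (OF ⧸ maximalIdeal OF ^ 2), g.Monic ∧ h.Monic ∧
          0 < g.degree ∧ 0 < h.degree ∧
          (Matrix.charpoly (Algebra.leftMulMatrix b β)).map
            (Ideal.Quotient.mk (maximalIdeal OF ^ 2)) = g * h :=
  charpoly_mod_sq_irreducible_general b β hβ
end

section
/- Let β ∈ M_n(O_F) be such that the reduction modulo 𝔭_F of its characteristic polynomial χ_β(t) = det(t·1_n − β) is the minimal polynomial over 𝔽 of the reduction β̄ ∈ M_n(𝔽). Then {X ∈ M_n(O_F) : Xβ = βX} = O_F[β], the O_F-subalgebra of M_n(O_F) generated by β. -/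
/-!
Since `χ_β` is monic of degree `n`, the hypothesis says that the minimal polynomial of `β̄` has
degree `n`. Over the PID `𝔽[X]` some vector `w` has annihilator exactly `(minpoly β̄)`, so
`q ↦ q(β̄) w` is injective on polynomials of degree `< n`, hence onto: `w` is a cyclic vector of
`β̄`. By Nakayama's lemma every lift `v` of `w` is a cyclic vector of `β`. A matrix `X` commuting
with `β` is determined by `X v`, and writing `X v = q(β) v` forces `X = q(β)`.
-/

open IsLocalRing Polynomial Module

section CyclicVector

variable (R : Type*) {A M : Type*} [CommSemiring R] [Semiring A] [Algebra R A] [AddCommMonoid M]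
  [Module A M] [Module R M] [IsScalarTower R A M]

noncomputable def aevalSMulLinearMap (a : A) (m : M) : R[X] →ₗ[R] M :=
  (LinearMap.toSpanSingleton A M m).restrictScalars R ∘ₗ (aeval a).toLinearMap

@[simp]
lemma aevalSMulLinearMap_apply (a : A) (m : M) (q : R[X]) :
    aevalSMulLinearMap R a m q = aeval a q • m :=
  rfl

def IsCyclicVector (a : A) (m : M) : Prop :=
  Function.Surjective (aevalSMulLinearMap R a m)

variable {R}

theorem IsCyclicVector.exists_eq_aeval_of_commute [FaithfulSMul A M] {a x : A} {m : M}
    (hm : IsCyclicVector R a m) (hx : Commute x a) : ∃ q : R[X], x = aeval a q := by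
  obtain ⟨q, hq⟩ := hm (x • m)
  refine ⟨q, eq_of_smul_eq_smul (α := M) fun y => ?_⟩
  obtain ⟨r, rfl⟩ := hm y
  have hxr : Commute x (aeval a r) :=
    Algebra.commute_of_mem_adjoin_singleton_of_commute (aeval_mem_adjoin_singleton R a) hx
  simp only [aevalSMulLinearMap_apply] at hq ⊢
  rw [smul_smul, hxr.eq, mul_smul, ← hq, smul_smul, smul_smul, ← map_mul, ← map_mul, mul_comm]

theorem IsCyclicVector.commute_iff_mem_adjoin_singleton [FaithfulSMul A M] {a x : A} {m : M}
    (hm : IsCyclicVector R a m) : Commute x a ↔ x ∈ Algebra.adjoin R {a} := by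
  refine ⟨fun hx => ?_, fun hx => (Algebra.commute_of_mem_adjoin_self hx).symm⟩
  obtain ⟨q, rfl⟩ := hm.exists_eq_aeval_of_commute hx
  exact aeval_mem_adjoin_singleton R a

end CyclicVector

section Field

variable {K A M : Type*} [Field K] [Ring A] [Algebra K A] [AddCommGroup M] [Module A M]
  [Module K M] [IsScalarTower K A M] [FaithfulSMul A M]

theorem exists_aeval_smul_eq_zero_iff_minpoly_dvd [Module.Finite K M] (a : A) :
    ∃ m : M, ∀ q : K[X], aeval a q • m = 0 ↔ minpoly K a ∣ q := by
  obtain ⟨m, hm⟩ := Module.exists_ker_toSpanSingleton_eq_annihilator K[X] (AEval K M a)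
  refine ⟨(AEval.of K M a).symm m, fun q => ?_⟩
  rw [minpoly.dvd_iff, ← RingHom.mem_ker, ← AEval.annihilator_eq_ker_aeval (M := M), ← hm]
  exact (AEval.of K M a).symm.map_eq_zero_iff

theorem exists_isCyclicVector_of_natDegree_minpoly_eq_finrank [FiniteDimensional K M] {a : A}
    (h : (minpoly K a).natDegree = finrank K M) : ∃ m : M, IsCyclicVector K a m := by
  obtain ⟨m, hm⟩ := exists_aeval_smul_eq_zero_iff_minpoly_dvd (K := K) (M := M) a
  let L := aevalSMulLinearMap K a m ∘ₗ (degreeLT K (minpoly K a).natDegree).subtype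
  have hinj : Function.Injective L := by
    refine (injective_iff_map_eq_zero L).2 fun ⟨q, hq⟩ hLq => Subtype.ext ?_
    by_contra hq0
    exact hq0 (eq_zero_of_dvd_of_natDegree_lt ((hm q).1 hLq)
      ((natDegree_lt_iff_degree_lt hq0).2 (mem_degreeLT.1 hq)))
  have hsurj : Function.Surjective L := by
    refine (LinearMap.injective_iff_surjective_of_finrank_eq_finrank ?_).1 hinj
    rw [(degreeLTEquiv K _).finrank_eq, finrank_fin_fun, h]
  exact ⟨m, fun x => let ⟨q, hq⟩ := hsurj x; ⟨q, hq⟩⟩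

end Field

theorem Submodule.pi_mem_smul_top_of_forall_mem {ι R : Type*} [Fintype ι] [DecidableEq ι]
    [CommSemiring R] {I : Ideal R} {y : ι → R} (hy : ∀ i, y i ∈ I) :
    y ∈ I • (⊤ : Submodule R (ι → R)) := by
  rw [pi_eq_sum_univ y]
  exact Submodule.sum_mem _ fun i _ => Submodule.smul_mem_smul (hy i) trivial

namespace Matrix

variable {ι R S : Type*} [Fintype ι] [DecidableEq ι]

instance [Semiring R] : FaithfulSMul (Matrix ι ι R) (ι → R) :=
  ⟨fun h => ext_iff_smul.2 h⟩

theorem map_aeval [CommSemiring R] [CommSemiring S] (f : R →+* S) (β : Matrix ι ι R) (q : R[X]) :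
    (aeval β q).map f = aeval (β.map f) (q.map f) :=
  map_aeval_eq_aeval_map (ψ := f.mapMatrix)
    (by ext r i j; simp [algebraMap_eq_diagonal, diagonal_apply, apply_ite f]) q β

theorem isCyclicVector_of_isCyclicVector_map [CommRing R] [CommRing S] {f : R →+* S}
    (hf : Function.Surjective f) (hker : RingHom.ker f ≤ Ideal.jacobson ⊥)
    {β : Matrix ι ι R} {v : ι → R} (h : IsCyclicVector S (β.map f) (f ∘ v)) :
    IsCyclicVector R β v := by
  rw [IsCyclicVector, ← LinearMap.range_eq_top, ← top_le_iff]
  refine Submodule.le_of_le_smul_of_le_jacobson_bot Module.Finite.fg_top hker fun x _ => ?_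
  obtain ⟨q', hq'⟩ := h (f ∘ x)
  obtain ⟨q, rfl⟩ := map_surjective f hf q'
  have hdiff_mem_ker : ∀ i, (x - aeval β q *ᵥ v) i ∈ RingHom.ker f := fun i => by
    rw [RingHom.mem_ker, Pi.sub_apply, map_sub, RingHom.map_mulVec, map_aeval, sub_eq_zero]
    exact congrFun hq'.symm i
  exact Submodule.mem_sup.2 ⟨_, ⟨q, rfl⟩, _,
    Submodule.pi_mem_smul_top_of_forall_mem hdiff_mem_ker, add_sub_cancel _ _⟩

theorem exists_isCyclicVector_of_natDegree_minpoly_map_residue [CommRing R] [IsLocalRing R]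
    {β : Matrix ι ι R}
    (h : (minpoly (ResidueField R) (β.map (residue R))).natDegree = Fintype.card ι) :
    ∃ v : ι → R, IsCyclicVector R β v := by
  obtain ⟨w, hw⟩ := exists_isCyclicVector_of_natDegree_minpoly_eq_finrank
    (h.trans (finrank_fintype_fun_eq_card _).symm)
  obtain ⟨v, rfl⟩ := residue_surjective.comp_left w
  exact ⟨v, isCyclicVector_of_isCyclicVector_map residue_surjective
    (ker_residue (R := R) ▸ maximalIdeal_le_jacobson ⊥) hw⟩

end Matrix

theorem commutant_eq_adjoin_of_charpoly_mod_eq_minpoly_general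
    {OF : Type*} [CommRing OF] [IsDomain OF] [IsDiscreteValuationRing OF]
    {n : ℕ} (β : Matrix (Fin n) (Fin n) OF)
    (hmin : (Matrix.charpoly β).map (residue OF) =
      minpoly (ResidueField OF) (β.map (residue OF)))
    (X : Matrix (Fin n) (Fin n) OF) :
    X * β = β * X ↔ X ∈ Algebra.adjoin OF {β} := by
  have hdeg : (minpoly (ResidueField OF) (β.map (residue OF))).natDegree =
      Fintype.card (Fin n) := by
    rw [← hmin, β.charpoly_monic.natDegree_map, β.charpoly_natDegree_eq_dim]
  obtain ⟨v, hv⟩ := Matrix.exists_isCyclicVector_of_natDegree_minpoly_map_residue hdeg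
  exact hv.commute_iff_mem_adjoin_singleton

theorem commutant_eq_adjoin_of_charpoly_mod_eq_minpoly
    {p : ℕ} [Fact (Nat.Prime p)] (hp : p ≠ 2)
    {F : Type*} [Field F] [Algebra ℚ_[p] F] [FiniteDimensional ℚ_[p] F]
    {OF : Type*} [CommRing OF] [IsDomain OF] [IsDiscreteValuationRing OF]
    [Algebra OF F] [IsFractionRing OF F]
    [Algebra ℤ_[p] OF] [Algebra ℤ_[p] F] [IsScalarTower ℤ_[p] ℚ_[p] F]
    [IsScalarTower ℤ_[p] OF F] [IsIntegralClosure OF ℤ_[p] F]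
    {n : ℕ} (β : Matrix (Fin n) (Fin n) OF)
    (hmin : (Matrix.charpoly β).map (residue OF) =
      minpoly (ResidueField OF) (β.map (residue OF)))
    (X : Matrix (Fin n) (Fin n) OF) :
    X * β = β * X ↔ X ∈ Algebra.adjoin OF {β} :=
  commutant_eq_adjoin_of_charpoly_mod_eq_minpoly_general β hmin X
end

section
/- Let β ∈ M_n(O_F) be such that the reduction modulo 𝔭_F of its characteristic polynomial χ_β(t) = det(t·1_n − β) is the minimal polynomial over 𝔽 of the reduction β̄ ∈ M_n(𝔽). Then for every integer m > 0, letting β_m ∈ M_n(O_F/𝔭_F^m) denote the reduction of β modulo 𝔭_F^m, one has {X ∈ M_n(O_F/𝔭_F^m) : Xβ_m = β_m X} = (O_F/𝔭_F^m)[β_m], the subalgebra of M_n(O_F/𝔭_F^m) generated by β_m over O_F/𝔭_F^m. -/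
/-!
Since the characteristic polynomial of `β̄` is its minimal polynomial, `β̄` has a cyclic
vector `v̄`: the Krylov matrix with columns `v̄, β̄ v̄, …, β̄ⁿ⁻¹ v̄` is invertible. For any lift
`v` of `v̄`, the Krylov matrix of `β` and `v` has a unit determinant, because its reduction
does, and so do its images over every quotient of `O_F`. Over any commutative ring, a cyclic
vector `v` of `B` does the rest: a matrix `X` commuting with `B` is determined by `X v`, and
writing `X v = q(B) v` forces `X = q(B)`.
-/

open Polynomial IsLocalRing

namespace Module.End

variable {K V : Type*} [Field K] [AddCommGroup V] [Module K V] [FiniteDimensional K V]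

theorem exists_forall_aeval_apply_eq_zero_iff (f : Module.End K V) :
    ∃ v : V, ∀ q : K[X], aeval f q v = 0 ↔ minpoly K f ∣ q := by
  obtain ⟨x, hx⟩ := exists_ker_toSpanSingleton_eq_annihilator K[X] (AEval' f)
  rw [← span_minpoly_eq_annihilator] at hx
  refine ⟨(AEval'.of f).symm x, fun q => ?_⟩
  rw [← Ideal.mem_span_singleton, ← hx, LinearMap.mem_ker, LinearMap.toSpanSingleton_apply,
    ← (AEval'.of f).symm.map_eq_zero_iff, AEval.of_symm_smul]
  rfl

theorem exists_linearIndependent_pow_apply (f : Module.End K V) :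
    ∃ v : V, LinearIndependent K fun i : Fin (minpoly K f).natDegree => (f ^ (i : ℕ)) v := by
  obtain ⟨v, hv⟩ := exists_forall_aeval_apply_eq_zero_iff f
  set n := (minpoly K f).natDegree
  let evalAt : K[X]_n →ₗ[K] V :=
    LinearMap.applyₗ v ∘ₗ (aeval f).toLinearMap ∘ₗ (degreeLT K n).subtype
  have hker : LinearMap.ker evalAt = ⊥ := by
    refine LinearMap.ker_eq_bot'.2 fun p hp => Subtype.ext ?_
    refine eq_zero_of_dvd_of_degree_lt ((hv p).1 hp) ?_
    rw [degree_eq_natDegree (minpoly.ne_zero (Algebra.IsIntegral.isIntegral f))]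
    exact mem_degreeLT.1 p.2
  have hbasis : evalAt ∘ degreeLT.basis K n = fun i : Fin n => (f ^ (i : ℕ)) v := by
    ext i
    simp [evalAt]
  exact ⟨v, hbasis ▸ (degreeLT.basis K n).linearIndependent.map' evalAt hker⟩

end Module.End

namespace Matrix

variable {n : ℕ} {R S : Type*} [CommRing R] [CommRing S]

def krylovMatrix (B : Matrix (Fin n) (Fin n) R) (v : Fin n → R) :
    Matrix (Fin n) (Fin n) R :=
  of fun i j => (B ^ (j : ℕ) *ᵥ v) i

theorem krylovMatrix_map (B : Matrix (Fin n) (Fin n) R) (v : Fin n → R) (f : R →+* S) :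
    (krylovMatrix B v).map f = krylovMatrix (B.map f) (f ∘ v) := by
  ext i j
  simp [krylovMatrix, RingHom.map_mulVec, Matrix.map_pow]

theorem krylovMatrix_mulVec (B : Matrix (Fin n) (Fin n) R) (v c : Fin n → R) :
    krylovMatrix B v *ᵥ c = (∑ j, c j • B ^ (j : ℕ)) *ᵥ v := by
  rw [sum_mulVec]
  ext i
  simp [krylovMatrix, mulVec_eq_sum, Finset.mul_sum, mul_left_comm]

theorem mul_krylovMatrix_of_commute {B Y : Matrix (Fin n) (Fin n) R} (h : Commute Y B)
    (v : Fin n → R) : Y * krylovMatrix B v = krylovMatrix B (Y *ᵥ v) := by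
  ext i j
  change (Y *ᵥ (B ^ (j : ℕ) *ᵥ v)) i = (B ^ (j : ℕ) *ᵥ (Y *ᵥ v)) i
  rw [mulVec_mulVec, mulVec_mulVec, (h.pow_right _).eq]

theorem centralizer_eq_adjoin_of_isUnit_det_krylovMatrix {B : Matrix (Fin n) (Fin n) R}
    {v : Fin n → R} (hv : IsUnit (krylovMatrix B v).det) :
    Subalgebra.centralizer R {B} = Algebra.adjoin R {B} := by
  refine le_antisymm (fun X hX => ?_) (Algebra.adjoin_le ?_)
  · have hX : Commute X B := ((Subalgebra.mem_centralizer_iff R).1 hX B rfl).symm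
    have hK : IsUnit (krylovMatrix B v) := (isUnit_iff_isUnit_det _).2 hv
    obtain ⟨c, hc⟩ := mulVec_surjective_iff_isUnit.2 hK (X *ᵥ v)
    set Q := ∑ j, c j • B ^ (j : ℕ)
    have hQ : Q ∈ Algebra.adjoin R {B} := Subalgebra.sum_mem _ fun j _ =>
      Subalgebra.smul_mem _ (Subalgebra.pow_mem _ (Algebra.self_mem_adjoin_singleton R B) _) _
    have hQB : Commute Q B :=
      Commute.sum_left _ _ _ fun j _ => ((Commute.refl B).pow_left _).smul_left _
    have hXQ : X * krylovMatrix B v = Q * krylovMatrix B v := by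
      rw [mul_krylovMatrix_of_commute hX, mul_krylovMatrix_of_commute hQB, ← krylovMatrix_mulVec,
        hc]
    exact hK.mul_left_inj.1 hXQ ▸ hQ
  · simp [Set.mem_centralizer_iff]

theorem exists_isUnit_det_krylovMatrix_of_charpoly_eq_minpoly {K : Type*} [Field K]
    (B : Matrix (Fin n) (Fin n) K) (h : B.charpoly = minpoly K B) :
    ∃ v, IsUnit (krylovMatrix B v).det := by
  obtain ⟨v, hv⟩ := Module.End.exists_linearIndependent_pow_apply (toLin' B)
  rw [minpoly_toLin', ← h, charpoly_natDegree_eq_dim, Fintype.card_fin] at hv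
  have hcol : (krylovMatrix B v).col = fun j : Fin n => (toLin' B ^ (j : ℕ)) v := by
    ext j i
    simp [krylovMatrix, col, ← toLin'_pow]
  exact ⟨v, (isUnit_iff_isUnit_det _).1 (linearIndependent_cols_iff_isUnit.1 (hcol ▸ hv))⟩

theorem exists_isUnit_det_krylovMatrix_of_charpoly_map_residue_eq_minpoly [IsLocalRing R]
    (B : Matrix (Fin n) (Fin n) R)
    (h : B.charpoly.map (residue R) = minpoly (ResidueField R) (B.map (residue R))) :
    ∃ v, IsUnit (krylovMatrix B v).det := by
  obtain ⟨w, hw⟩ := exists_isUnit_det_krylovMatrix_of_charpoly_eq_minpoly (B.map (residue R))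
    (by rw [charpoly_map, h])
  obtain ⟨v, rfl⟩ := (residue_surjective (R := R)).comp_left w
  refine ⟨v, isUnit_of_map_unit (residue R) _ ?_⟩
  rwa [RingHom.map_det, RingHom.mapMatrix_apply, krylovMatrix_map]

theorem centralizer_map_eq_adjoin_of_charpoly_map_residue_eq_minpoly [IsLocalRing R]
    (B : Matrix (Fin n) (Fin n) R)
    (h : B.charpoly.map (residue R) = minpoly (ResidueField R) (B.map (residue R)))
    (f : R →+* S) :
    Subalgebra.centralizer S {B.map f} = Algebra.adjoin S {B.map f} := by
  obtain ⟨v, hv⟩ := exists_isUnit_det_krylovMatrix_of_charpoly_map_residue_eq_minpoly B h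
  refine centralizer_eq_adjoin_of_isUnit_det_krylovMatrix (v := f ∘ v) ?_
  rw [← krylovMatrix_map, ← RingHom.mapMatrix_apply, ← RingHom.map_det]
  exact hv.map f

end Matrix

theorem commutant_mod_pow_eq_adjoin_of_charpoly_mod_eq_minpoly_general
    {OF : Type*} [CommRing OF] [IsDomain OF] [IsDiscreteValuationRing OF]
    {n : ℕ} (β : Matrix (Fin n) (Fin n) OF)
    (hmin : (Matrix.charpoly β).map (residue OF) =
      minpoly (ResidueField OF) (β.map (residue OF)))
    (m : ℕ)
    (X : Matrix (Fin n) (Fin n) (OF ⧸ maximalIdeal OF ^ m)) :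
    X * β.map (Ideal.Quotient.mk (maximalIdeal OF ^ m)) =
        β.map (Ideal.Quotient.mk (maximalIdeal OF ^ m)) * X ↔
      X ∈ Algebra.adjoin (OF ⧸ maximalIdeal OF ^ m)
        {β.map (Ideal.Quotient.mk (maximalIdeal OF ^ m))} := by
  rw [← Matrix.centralizer_map_eq_adjoin_of_charpoly_map_residue_eq_minpoly β hmin,
    Subalgebra.mem_centralizer_iff]
  exact ⟨fun h _ hB => (Set.mem_singleton_iff.1 hB) ▸ h.symm, fun h => (h _ rfl).symm⟩

theorem commutant_mod_pow_eq_adjoin_of_charpoly_mod_eq_minpoly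
    {p : ℕ} [Fact (Nat.Prime p)] (hp : p ≠ 2)
    {F : Type*} [Field F] [Algebra ℚ_[p] F] [FiniteDimensional ℚ_[p] F]
    {OF : Type*} [CommRing OF] [IsDomain OF] [IsDiscreteValuationRing OF]
    [Algebra OF F] [IsFractionRing OF F]
    [Algebra ℤ_[p] OF] [Algebra ℤ_[p] F] [IsScalarTower ℤ_[p] ℚ_[p] F]
    [IsScalarTower ℤ_[p] OF F] [IsIntegralClosure OF ℤ_[p] F]
    {n : ℕ} (β : Matrix (Fin n) (Fin n) OF)
    (hmin : (Matrix.charpoly β).map (residue OF) =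
      minpoly (ResidueField OF) (β.map (residue OF)))
    (m : ℕ) (hm : 0 < m)
    (X : Matrix (Fin n) (Fin n) (OF ⧸ maximalIdeal OF ^ m)) :
    X * β.map (Ideal.Quotient.mk (maximalIdeal OF ^ m)) =
        β.map (Ideal.Quotient.mk (maximalIdeal OF ^ m)) * X ↔
      X ∈ Algebra.adjoin (OF ⧸ maximalIdeal OF ^ m)
        {β.map (Ideal.Quotient.mk (maximalIdeal OF ^ m))} :=
  commutant_mod_pow_eq_adjoin_of_charpoly_mod_eq_minpoly_general β hmin m X
end

section
/- Let β ∈ M_n(O_F) have characteristic polynomial χ_β(t) = t^n − a_n t^{n−1} − ⋯ − a_2 t − a_1, and assume that the reduction of χ_β(t) modulo 𝔭_F is the minimal polynomial over 𝔽 of the reduction β̄ ∈ M_n(𝔽). Then there exists g ∈ GL_n(O_F) such that g β g^{−1} is the companion matrix whose first n−1 columns are the standard basis vectors shifted down by one (i.e., subdiagonal entries equal to 1, all other entries of the first n−1 columns zero) and whose last column is (a_1, a_2, …, a_n)^T. -/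
/-!
Reduce modulo `𝔭_F`. Since `χ_β̄ = minpoly β̄` has degree `n`, the structure theorem for the
`𝔽[X]`-module `𝔽ⁿ` gives a vector `v̄` whose annihilator is generated by `minpoly β̄`, so
`v̄, β̄ v̄, …, β̄ⁿ⁻¹ v̄` is a basis. Lift `v̄` to `v ∈ O_Fⁿ`: the Krylov matrix `P` with columns
`v, β v, …, βⁿ⁻¹ v` reduces to an invertible matrix, hence lies in `GL_n(O_F)`, and Cayley–Hamilton
gives `β P = P C` for the companion matrix `C`.
-/

open IsLocalRing Polynomial Module

namespace Module.End

variable {K V : Type*} [Field K] [AddCommGroup V] [Module K V]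

theorem exists_aeval_apply_eq_zero_iff_minpoly_dvd [FiniteDimensional K V] (f : End K V) :
    ∃ v : V, ∀ q : K[X], aeval f q v = 0 ↔ minpoly K f ∣ q := by
  obtain ⟨v, hv⟩ := exists_ker_toSpanSingleton_eq_annihilator K[X] (AEval' f)
  obtain ⟨v, rfl⟩ := (AEval'.of f).surjective v
  refine ⟨v, fun q => ?_⟩
  rw [← Ideal.mem_span_singleton, span_minpoly_eq_annihilator, ← hv, LinearMap.mem_ker,
    LinearMap.toSpanSingleton_apply]
  exact (AEval'.of f).map_eq_zero_iff.symm

theorem linearIndependent_pow_apply {f : End K V} {v : V}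
    (hv : ∀ q : K[X], aeval f q v = 0 → minpoly K f ∣ q) :
    LinearIndependent K fun i : Fin (minpoly K f).natDegree => (f ^ (i : ℕ)) v := by
  refine (linearIndependent_pow f).map (f := LinearMap.applyₗ (R := K) v) ?_
  rw [Submodule.disjoint_def]
  intro g hg hgv
  have hspan : Submodule.span K (Set.range fun i : Fin (minpoly K f).natDegree => f ^ (i : ℕ)) ≤
      LinearMap.range (aeval f).toLinearMap :=
    Submodule.span_le.mpr <| Set.range_subset_iff.mpr fun i => ⟨X ^ (i : ℕ), by simp⟩
  obtain ⟨q, rfl⟩ := hspan hg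
  exact minpoly.dvd_iff.mp (hv q hgv)

end Module.End

theorem IsUnit.exists_units_mul_mul_inv_eq {M : Type*} [Monoid M] {a b p : M} (hp : IsUnit p)
    (h : a * p = p * b) : ∃ g : Mˣ, ↑g * a * ↑g⁻¹ = b := by
  obtain ⟨u, rfl⟩ := hp
  exact ⟨u⁻¹, by simp [mul_assoc, h]⟩

namespace Matrix

variable {ι R : Type*} [Fintype ι] [DecidableEq ι]

theorem exists_linearIndependent_pow_mulVec {K : Type*} [Field K] (A : Matrix ι ι K) :
    ∃ v : ι → K, LinearIndependent K fun i : Fin (minpoly K A).natDegree => A ^ (i : ℕ) *ᵥ v := by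
  obtain ⟨v, hv⟩ := Module.End.exists_aeval_apply_eq_zero_iff_minpoly_dvd (toLin' A)
  have hind := Module.End.linearIndependent_pow_apply fun q => (hv q).mp
  rw [minpoly_toLin'] at hind
  exact ⟨v, by simpa only [← toLin'_pow, toLin'_apply] using hind⟩

variable [CommRing R]

theorem isUnit_map_iff {S : Type*} [CommRing S] (f : R →+* S) [IsLocalHom f]
    {M : Matrix ι ι R} : IsUnit (M.map f) ↔ IsUnit M := by
  rw [isUnit_iff_isUnit_det, isUnit_iff_isUnit_det, ← RingHom.mapMatrix_apply, ← RingHom.map_det,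
    _root_.isUnit_map_iff]

theorem pow_eq_sum_smul_pow_of_charpoly_eq {m : ℕ} {A : Matrix ι ι R} {a : Fin m → R}
    (h : A.charpoly = X ^ m - ∑ i, C (a i) * X ^ (i : ℕ)) :
    A ^ m = ∑ i, a i • A ^ (i : ℕ) := by
  simpa [h, sub_eq_zero, Algebra.smul_def] using aeval_self_charpoly A

def krylov (m : ℕ) (A : Matrix ι ι R) (v : ι → R) : Matrix ι (Fin m) R :=
  of fun i j => (A ^ (j : ℕ) *ᵥ v) i

def companion {n : ℕ} (a : Fin n → R) : Matrix (Fin n) (Fin n) R :=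
  of fun i j => if (j : ℕ) = n - 1 then a i else if (i : ℕ) = (j : ℕ) + 1 then 1 else 0

theorem krylov_map {S : Type*} [CommRing S] (f : R →+* S) (m : ℕ) (A : Matrix ι ι R)
    (v : ι → R) : (krylov m A v).map f = krylov m (A.map f) (f ∘ v) := by
  ext i j
  simp only [krylov, map_apply, of_apply, RingHom.map_mulVec, ← RingHom.mapMatrix_apply, map_pow]

theorem mul_krylov_eq_krylov_mul_companion {n : ℕ} {A : Matrix ι ι R} {a : Fin n → R}
    (h : A ^ n = ∑ i, a i • A ^ (i : ℕ)) (v : ι → R) :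
    A * krylov n A v = krylov n A v * companion a := by
  ext i j
  have hA : (A * krylov n A v) i j = (A ^ ((j : ℕ) + 1) *ᵥ v) i := by
    rw [pow_succ', ← mulVec_mulVec]
    rfl
  rw [hA, mul_apply]
  by_cases hj : (j : ℕ) = n - 1
  · rw [show (j : ℕ) + 1 = n by omega, h]
    simp [krylov, companion, hj, sum_mulVec, smul_mulVec, mul_comm]
  · have hlt : (j : ℕ) + 1 < n := by omega
    rw [Finset.sum_eq_single ⟨(j : ℕ) + 1, hlt⟩]
    · simp [krylov, companion, hj]
    · intro k _ hk
      have hk' : (k : ℕ) ≠ j + 1 := fun e => hk (Fin.ext e)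
      simp [companion, hj, hk']
    · simp

end Matrix

theorem conjugate_to_companion_of_charpoly_mod_eq_minpoly_general
    {OF : Type*} [CommRing OF] [IsDomain OF] [IsDiscreteValuationRing OF]
    {n : ℕ} (β : Matrix (Fin n) (Fin n) OF) (a : Fin n → OF)
    (hchar : Matrix.charpoly β =
      Polynomial.X ^ n - ∑ i : Fin n, Polynomial.C (a i) * Polynomial.X ^ (i : ℕ))
    (hmin : (Matrix.charpoly β).map (residue OF) =
      minpoly (ResidueField OF) (β.map (residue OF))) :
    ∃ g : (Matrix (Fin n) (Fin n) OF)ˣ,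
      (g : Matrix (Fin n) (Fin n) OF) * β * ((g⁻¹ : (Matrix (Fin n) (Fin n) OF)ˣ) :
          Matrix (Fin n) (Fin n) OF) =
        Matrix.of fun i j : Fin n =>
          if (j : ℕ) = n - 1 then a i
          else if (i : ℕ) = (j : ℕ) + 1 then 1 else 0 := by
  have hdeg : (minpoly (ResidueField OF) (β.map (residue OF))).natDegree = n := by
    rw [← hmin, (Matrix.charpoly_monic β).natDegree_map, Matrix.charpoly_natDegree_eq_dim,
      Fintype.card_fin]
  obtain ⟨v, hv⟩ := Matrix.exists_linearIndependent_pow_mulVec (β.map (residue OF))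
  rw [hdeg] at hv
  obtain ⟨w, rfl⟩ := residue_surjective.comp_left v
  have hunit : IsUnit (Matrix.krylov n β w) := by
    rw [← Matrix.isUnit_map_iff (residue OF), Matrix.krylov_map,
      ← Matrix.linearIndependent_cols_iff_isUnit]
    exact hv
  exact hunit.exists_units_mul_mul_inv_eq <|
    Matrix.mul_krylov_eq_krylov_mul_companion (Matrix.pow_eq_sum_smul_pow_of_charpoly_eq hchar) w

theorem conjugate_to_companion_of_charpoly_mod_eq_minpoly
    {p : ℕ} [Fact (Nat.Prime p)] (hp : p ≠ 2)
    {F : Type*} [Field F] [Algebra ℚ_[p] F] [FiniteDimensional ℚ_[p] F]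
    {OF : Type*} [CommRing OF] [IsDomain OF] [IsDiscreteValuationRing OF]
    [Algebra OF F] [IsFractionRing OF F]
    [Algebra ℤ_[p] OF] [Algebra ℤ_[p] F] [IsScalarTower ℤ_[p] ℚ_[p] F]
    [IsScalarTower ℤ_[p] OF F] [IsIntegralClosure OF ℤ_[p] F]
    {n : ℕ} (β : Matrix (Fin n) (Fin n) OF) (a : Fin n → OF)
    (hchar : Matrix.charpoly β =
      Polynomial.X ^ n - ∑ i : Fin n, Polynomial.C (a i) * Polynomial.X ^ (i : ℕ))
    (hmin : (Matrix.charpoly β).map (residue OF) =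
      minpoly (ResidueField OF) (β.map (residue OF))) :
    ∃ g : (Matrix (Fin n) (Fin n) OF)ˣ,
      (g : Matrix (Fin n) (Fin n) OF) * β * ((g⁻¹ : (Matrix (Fin n) (Fin n) OF)ˣ) :
          Matrix (Fin n) (Fin n) OF) =
        Matrix.of fun i j : Fin n =>
          if (j : ℕ) = n - 1 then a i
          else if (i : ℕ) = (j : ℕ) + 1 then 1 else 0 :=
  conjugate_to_companion_of_charpoly_mod_eq_minpoly_general β a hchar hmin
end

section
/- Let l ≥ 1 be an integer and let ε ∈ O_K^× satisfy N_{K/F}(ε) ≡ 1 (mod 𝔭_F^l). Then there exists ξ ∈ O_K^× with N_{K/F}(ξ) = 1 and ξ ≡ ε (mod 𝔭_K^{el}). -/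
/-!
`O_F` is a finite module over the complete ring `ℤ_p`, hence complete for every nonzero proper
ideal of the DVR `O_F`, in particular for `𝔭_F^l`. Hensel's lemma at `𝔭_F^l` applied to
`X^n - N(ε)` at `1` (the derivative `n` is a unit since `p ∤ n`) gives `d ≡ 1 mod 𝔭_F^l` with
`d^n = N(ε)`. Then `ξ = ε / d` has norm `N(ε) / d^n = 1`, and `ξ - ε = ξ (1 - d)` lies in
`𝔭_F^l O_K ⊆ 𝔭_K^{el}`.
-/

open IsLocalRing

theorem IsPrecomplete.of_finite {R M : Type*} [CommRing R] [AddCommGroup M] [Module R M]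
    (I : Ideal R) [IsPrecomplete I R] [Module.Finite R M] : IsPrecomplete I M := by
  rw [← AdicCompletion.of_surjective_iff]
  intro x
  obtain ⟨t, rfl⟩ := AdicCompletion.ofTensorProduct_surjective_of_finite I M x
  induction t using TensorProduct.induction_on with
  | zero => exact ⟨0, by simp⟩
  | tmul r m =>
    obtain ⟨s, rfl⟩ := AdicCompletion.of_surjective I R r
    refine ⟨s • m, ?_⟩
    rw [AdicCompletion.ofTensorProduct_tmul, map_smul, ← algebraMap_smul (AdicCompletion I R) s,
      AdicCompletion.algebraMap_apply, Algebra.algebraMap_self, RingHom.id_apply]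
  | add x y hx hy =>
    obtain ⟨a, ha⟩ := hx
    obtain ⟨b, hb⟩ := hy
    exact ⟨a + b, by rw [map_add, ha, hb, map_add]⟩

theorem IsPrecomplete.of_pow_le_of_pow_le {R M : Type*} [CommRing R] [AddCommGroup M]
    [Module R M] {I J : Ideal R} [IsPrecomplete I M] {a b : ℕ} (hIJ : I ^ a ≤ J)
    (hJI : J ^ b ≤ I) : IsPrecomplete J M := by
  have hIJ' : I ^ (a + 1) ≤ J := (Ideal.pow_le_pow_right a.le_succ).trans hIJ
  have hJI' : J ^ (b + 1) ≤ I := (Ideal.pow_le_pow_right b.le_succ).trans hJI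
  have smul_le {K L : Ideal R} {c : ℕ} (h : K ^ c ≤ L) (n : ℕ) :
      (K ^ (c * n) • ⊤ : Submodule R M) ≤ L ^ n • ⊤ :=
    Submodule.smul_mono_left (pow_mul K c n ▸ Ideal.pow_right_mono h n)
  refine ⟨fun f hf => ?_⟩
  obtain ⟨L, hL⟩ := IsPrecomplete.prec ‹_› (f := fun n => f ((b + 1) * n))
    fun hmn => SModEq.mono (smul_le hJI' _) (hf (Nat.mul_le_mul_left _ hmn))
  refine ⟨L, fun n => ?_⟩
  have hn : n ≤ (b + 1) * ((a + 1) * n) :=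
    (Nat.le_mul_of_pos_left n a.succ_pos).trans (Nat.le_mul_of_pos_left _ b.succ_pos)
  exact (hf hn).trans (SModEq.mono (smul_le hIJ' n) (hL ((a + 1) * n)))

namespace IsDiscreteValuationRing

variable {R : Type*} [CommRing R] [IsDomain R] [IsDiscreteValuationRing R]

theorem exists_pow_le {I J : Ideal R} (hI : I ≠ ⊤) (hJ : J ≠ ⊥) : ∃ a, I ^ a ≤ J := by
  obtain ⟨ϖ, hϖ⟩ := exists_irreducible R
  obtain ⟨a, rfl⟩ := ideal_eq_span_pow_irreducible hJ hϖ
  refine ⟨a, ?_⟩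
  rw [← Ideal.span_singleton_pow, ← hϖ.maximalIdeal_eq]
  exact Ideal.pow_right_mono (le_maximalIdeal hI) a

theorem isPrecomplete_of_isPrecomplete {M : Type*} [AddCommGroup M] [Module R M]
    {I J : Ideal R} [IsPrecomplete I M] (hI : I ≠ ⊥) (hI' : I ≠ ⊤) (hJ : J ≠ ⊥) (hJ' : J ≠ ⊤) :
    IsPrecomplete J M :=
  have ⟨_, hIJ⟩ := exists_pow_le hI' hJ
  have ⟨_, hJI⟩ := exists_pow_le hJ' hI
  .of_pow_le_of_pow_le hIJ hJI

/-- `S` is precomplete for `𝔪_R S` as a finite `R`-module, and in the DVR `S` all nonzero proper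
ideals define the same topology. -/
theorem isAdicComplete_of_finite {S : Type*} [CommRing S] [IsDomain S]
    [IsDiscreteValuationRing S] [Algebra R S] [Module.Finite R S] [FaithfulSMul R S]
    [IsPrecomplete (IsLocalRing.maximalIdeal R) R] {J : Ideal S} (hJ : J ≠ ⊥) (hJ' : J ≠ ⊤) :
    IsAdicComplete J S where
  toIsHausdorff := .of_isDomain J hJ'
  toIsPrecomplete := by
    have : IsPrecomplete ((IsLocalRing.maximalIdeal R).map (algebraMap R S)) S :=
      IsPrecomplete.map_algebraMap_iff.mpr (.of_finite _)
    refine isPrecomplete_of_isPrecomplete (I := (IsLocalRing.maximalIdeal R).map (algebraMap R S))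
      ?_ ?_ hJ hJ'
    · rw [Ne, Ideal.map_eq_bot_iff_of_injective (FaithfulSMul.algebraMap_injective R S)]
      exact not_a_field R
    · exact (map_maximalIdeal_lt_top (algebraMap R S)).ne

end IsDiscreteValuationRing

theorem HenselianRing.exists_pow_eq_of_sub_one_mem {R : Type*} [CommRing R] {I : Ideal R}
    [HenselianRing R I] {n : ℕ} (hn : n ≠ 0) (hnI : IsUnit (n : R)) {c : R} (hc : c - 1 ∈ I) :
    ∃ d : R, d ^ n = c ∧ d - 1 ∈ I := by
  open Polynomial in
  obtain ⟨d, hd, hd1⟩ := HenselianRing.is_henselian (X ^ n - C c) (monic_X_pow_sub_C c hn) 1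
    (by rw [eval_sub, eval_pow, eval_X, eval_C, one_pow, ← neg_sub]; exact I.neg_mem hc)
    (by
      rw [derivative_sub, derivative_X_pow, derivative_C, sub_zero, eval_mul, eval_C, eval_pow,
        eval_X, one_pow, mul_one, map_natCast]
      exact hnI.map (Ideal.Quotient.mk I))
  refine ⟨d, ?_, hd1⟩
  rwa [IsRoot, eval_sub, eval_pow, eval_X, eval_C, sub_eq_zero] at hd

theorem Ideal.map_pow_le_pow_ramificationIdx'_mul {R S : Type*} [CommRing R] [CommRing S]
    [Algebra R S] (p : Ideal R) (P : Ideal S) (l : ℕ) :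
    (p ^ l).map (algebraMap R S) ≤ P ^ (p.ramificationIdx' P * l) := by
  rw [Ideal.map_pow, pow_mul]
  exact Ideal.pow_right_mono le_pow_ramificationIdx' l

theorem Algebra.norm_algebraMap_mul_algebraMap {A B F K : Type*} [CommRing A] [CommRing B]
    [Field F] [Field K] [Algebra A B] [Algebra A F] [Algebra A K] [Algebra B K] [Algebra F K]
    [IsScalarTower A B K] [IsScalarTower A F K] (x : B) (a : A) :
    Algebra.norm F (algebraMap B K (x * algebraMap A B a)) =
      Algebra.norm F (algebraMap B K x) * algebraMap A F a ^ Module.finrank F K := by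
  rw [map_mul, map_mul, ← IsScalarTower.algebraMap_apply, IsScalarTower.algebraMap_apply A F K,
    Algebra.norm_algebraMap]

theorem PadicInt.isUnit_natCast_of_not_dvd {p : ℕ} [Fact p.Prime] {A : Type*} [Semiring A]
    [Algebra ℤ_[p] A] {n : ℕ} (h : ¬p ∣ n) : IsUnit (n : A) := by
  have : IsUnit (n : ℤ_[p]) := PadicInt.isUnit_iff.mpr
    (PadicInt.norm_natCast_eq_one_iff.mpr ((Nat.Prime.coprime_iff_not_dvd Fact.out).mpr h))
  simpa using this.map (algebraMap ℤ_[p] A)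

theorem IsIntegralClosure.faithfulSMul_padicInt {p : ℕ} [Fact p.Prime] {F : Type*} [Field F]
    [Algebra ℚ_[p] F] (OF : Type*) [CommRing OF] [Algebra OF F] [Algebra ℤ_[p] OF]
    [Algebra ℤ_[p] F] [IsScalarTower ℤ_[p] ℚ_[p] F] [IsScalarTower ℤ_[p] OF F]
    [IsIntegralClosure OF ℤ_[p] F] : FaithfulSMul ℤ_[p] OF := by
  rw [faithfulSMul_iff_algebraMap_injective]
  refine Function.Injective.of_comp (f := algebraMap OF F) ?_
  rw [← RingHom.coe_comp, ← IsScalarTower.algebraMap_eq, IsScalarTower.algebraMap_eq ℤ_[p] ℚ_[p]]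
  exact (algebraMap ℚ_[p] F).injective.comp (IsFractionRing.injective ℤ_[p] ℚ_[p])

theorem exists_norm_one_congruent_unit_general
    {p : ℕ} [Fact (Nat.Prime p)]
    {F : Type*} [Field F] [Algebra ℚ_[p] F] [FiniteDimensional ℚ_[p] F]
    {OF : Type*} [CommRing OF] [IsDomain OF] [IsDiscreteValuationRing OF]
    [Algebra OF F] [Algebra ℤ_[p] OF] [Algebra ℤ_[p] F] [IsScalarTower ℤ_[p] ℚ_[p] F]
    [IsScalarTower ℤ_[p] OF F] [IsIntegralClosure OF ℤ_[p] F]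
    {K : Type*} [Field K] [Algebra F K]
    {OK : Type*} [CommRing OK] [IsDomain OK] [IsDiscreteValuationRing OK]
    [Algebra OK K] [Algebra OF OK] [Algebra OF K] [IsScalarTower OF OK K] [IsScalarTower OF F K]
    (hpn : ¬ p ∣ Module.finrank F K)
    (e : ℕ)
    (he : e = Ideal.ramificationIdx' (maximalIdeal OF) (maximalIdeal OK))
    (l : ℕ) (hl : 1 ≤ l)
    (ε : OK) (hε : IsUnit ε)
    (hnorm : ∃ c : OF, algebraMap OF F c = Algebra.norm F (algebraMap OK K ε) ∧
      c - 1 ∈ maximalIdeal OF ^ l) :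
    ∃ ξ : OK, IsUnit ξ ∧ Algebra.norm F (algebraMap OK K ξ) = 1 ∧
      ξ - ε ∈ maximalIdeal OK ^ (e * l) := by
  obtain ⟨c, hc, hc1⟩ := hnorm
  have := IsIntegralClosure.faithfulSMul_padicInt (p := p) (F := F) OF
  have := IsIntegralClosure.finite ℤ_[p] ℚ_[p] F OF
  have hl_ne_top : maximalIdeal OF ^ l ≠ ⊤ :=
    ne_top_of_le_ne_top (maximalIdeal.isMaximal OF).ne_top (Ideal.pow_le_self (by omega))
  have : IsAdicComplete (maximalIdeal OF ^ l) OF :=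
    IsDiscreteValuationRing.isAdicComplete_of_finite (R := ℤ_[p])
      (pow_ne_zero _ (IsDiscreteValuationRing.not_a_field OF)) hl_ne_top
  have hn0 : Module.finrank F K ≠ 0 := fun h => hpn (h ▸ dvd_zero p)
  obtain ⟨d, hdc, hd1⟩ := HenselianRing.exists_pow_eq_of_sub_one_mem hn0
    (PadicInt.isUnit_natCast_of_not_dvd (A := OF) hpn) hc1
  have hd1' : 1 - d ∈ maximalIdeal OF ^ l := by rw [← neg_sub]; exact neg_mem hd1
  obtain ⟨u, rfl⟩ : IsUnit d := isUnit_of_mem_nonunits_one_sub_self d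
    ((mem_maximalIdeal _).mp (Ideal.pow_le_self (by omega) hd1'))
  refine ⟨ε * algebraMap OF OK ↑u⁻¹, hε.mul ((u⁻¹).isUnit.map _), ?_, ?_⟩
  · rw [Algebra.norm_algebraMap_mul_algebraMap, ← hc, ← hdc, ← map_pow, ← map_mul, ← mul_pow,
      Units.mul_inv, one_pow, map_one]
  · have hdiff : ε * algebraMap OF OK ↑u⁻¹ - ε =
        ε * algebraMap OF OK ↑u⁻¹ * algebraMap OF OK (1 - u) := by
      rw [map_sub, map_one, mul_sub, mul_one, mul_assoc, ← map_mul, Units.inv_mul, map_one,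
        mul_one]
    rw [hdiff, he]
    exact Ideal.mul_mem_left _ _
      (Ideal.map_pow_le_pow_ramificationIdx'_mul _ _ l (Ideal.mem_map_of_mem _ hd1'))

theorem exists_norm_one_congruent_unit
    {p : ℕ} [Fact (Nat.Prime p)] (hp : p ≠ 2)
    {F : Type*} [Field F] [Algebra ℚ_[p] F] [FiniteDimensional ℚ_[p] F]
    {OF : Type*} [CommRing OF] [IsDomain OF] [IsDiscreteValuationRing OF]
    [Algebra OF F] [IsFractionRing OF F]
    [Algebra ℤ_[p] OF] [Algebra ℤ_[p] F] [IsScalarTower ℤ_[p] ℚ_[p] F]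
    [IsScalarTower ℤ_[p] OF F] [IsIntegralClosure OF ℤ_[p] F]
    {K : Type*} [Field K] [Algebra F K] [FiniteDimensional F K]
    {OK : Type*} [CommRing OK] [IsDomain OK] [IsDiscreteValuationRing OK]
    [Algebra OK K] [IsFractionRing OK K]
    [Algebra OF OK] [Algebra OF K] [IsScalarTower OF OK K] [IsScalarTower OF F K]
    [IsIntegralClosure OK OF K]
    (hn : 1 < Module.finrank F K) (hpn : ¬ p ∣ Module.finrank F K)
    (e : ℕ)
    (he : e = Ideal.ramificationIdx' (maximalIdeal OF) (maximalIdeal OK))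
    (l : ℕ) (hl : 1 ≤ l)
    (ε : OK) (hε : IsUnit ε)
    (hnorm : ∃ c : OF, algebraMap OF F c = Algebra.norm F (algebraMap OK K ε) ∧
      c - 1 ∈ maximalIdeal OF ^ l) :
    ∃ ξ : OK, IsUnit ξ ∧ Algebra.norm F (algebraMap OK K ξ) = 1 ∧
      ξ - ε ∈ maximalIdeal OK ^ (e * l) :=
  exists_norm_one_congruent_unit_general hpn e he l hl ε hε hnorm
end
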